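/- arXiv:1612.02641 — 4 statements merged into one kernel-verified Lean document; each statement's English description precedes it below -/
import Mathlib

section
/- The bounded solution of the Fourier-transformed Shercliff system iξ(b̂ - β∞) + û'' = 0, iξ û + b̂'' = 0 on (0,∞), with û(0)=b̂(0)=0, û→0, b̂→β∞, û', b̂' → 0 at infinity, is unique. -/
/-!
Subtracting two solutions leaves the homogeneous system `U'' = -iξ B`, `B'' = -iξ U` with zero
data at `0` and decay at infinity. It decouples into `(U ± B)'' = ∓iξ (U ± B)`, and `∓iξ` lies
in the slit plane because `ξ ≠ 0`, so it has a square root `μ` with `Re μ > 0`. For a decaying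
solution of `h'' = μ² h`, the combination `h' + μ h` solves `w' = μ w` and decays, hence vanishes;
then `h' = -μ h` with `h 0 = 0` forces `h = 0`. Both first-order steps use the integrating
factor `exp (-μ t)`.
-/

open Filter Topology Set
open scoped Complex

lemma Complex.exists_sq_eq_of_mem_slitPlane {c : ℂ} (hc : c ∈ Complex.slitPlane) :
    ∃ μ : ℂ, 0 < μ.re ∧ μ ^ 2 = c := by
  refine ⟨c ^ (2⁻¹ : ℂ), ?_, Complex.cpow_ofNat_inv_pow c 2⟩
  rw [Complex.cpow_inv_two_re, Real.sqrt_pos]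
  rcases Complex.mem_slitPlane_iff.1 hc with hre | him
  · linarith [norm_nonneg c]
  · linarith [neg_abs_le c.re, Complex.abs_re_lt_norm.2 him]

lemma ContDiffOn.hasDerivAt_and_hasDerivAt_deriv {𝕜 F : Type*} [NontriviallyNormedField 𝕜]
    [NormedAddCommGroup F] [NormedSpace 𝕜 F] {f : 𝕜 → F} {s : Set 𝕜} {x : 𝕜}
    (hf : ContDiffOn 𝕜 2 f s) (hs : IsOpen s) (hx : x ∈ s) :
    HasDerivAt f (deriv f x) x ∧ HasDerivAt (deriv f) (deriv (deriv f) x) x := by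
  have hf' : ContDiffOn 𝕜 1 (deriv f) s := hf.deriv_of_isOpen hs (by norm_num)
  exact ⟨(hf.differentiableOn (by norm_num) x hx).differentiableAt (hs.mem_nhds hx) |>.hasDerivAt,
    (hf'.differentiableOn one_ne_zero x hx).differentiableAt (hs.mem_nhds hx) |>.hasDerivAt⟩

lemma hasDerivAt_cexp_neg_mul (μ : ℂ) (t : ℝ) :
    HasDerivAt (fun t : ℝ => cexp (-μ * t)) (-μ * cexp (-μ * t)) t := by
  have := ((hasDerivAt_id (t : ℂ)).const_mul (-μ)).cexp.comp_ofReal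
  simpa [mul_comm] using this

lemma tendsto_cexp_neg_mul_atTop {μ : ℂ} (hμ : 0 < μ.re) :
    Tendsto (fun t : ℝ => cexp (-μ * t)) atTop (𝓝 0) := by
  refine Complex.tendsto_exp_comap_re_atBot.comp (tendsto_comap_iff.2 ?_)
  simpa [Function.comp_def] using tendsto_id.const_mul_atTop_of_neg (neg_lt_zero.2 hμ)

section FirstOrder

variable {a : ℝ} {μ : ℂ} {w : ℝ → ℂ}

lemma mul_cexp_neg_mul_eq_of_hasDerivAt (hw : ∀ t ∈ Ioi a, HasDerivAt w (μ * w t) t)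
    {s t : ℝ} (hs : s ∈ Ioi a) (ht : t ∈ Ioi a) :
    w s * cexp (-μ * s) = w t * cexp (-μ * t) := by
  have hd : ∀ t ∈ Ioi a, HasDerivAt (fun t => w t * cexp (-μ * t)) 0 t := fun t ht =>
    ((hw t ht).mul (hasDerivAt_cexp_neg_mul μ t)).congr_deriv (by ring)
  exact isOpen_Ioi.is_const_of_deriv_eq_zero isPreconnected_Ioi
    (fun t ht => (hd t ht).differentiableAt.differentiableWithinAt) (fun t ht => (hd t ht).deriv)
    hs ht

lemma eqOn_zero_of_hasDerivAt_of_tendsto_mul_cexp {l : Filter ℝ} [l.NeBot]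
    (hw : ∀ t ∈ Ioi a, HasDerivAt w (μ * w t) t) (hl : Ioi a ∈ l)
    (hlim : Tendsto (fun t => w t * cexp (-μ * t)) l (𝓝 0)) : EqOn w 0 (Ioi a) := by
  intro t ht
  have hconst : Tendsto (fun _ : ℝ => w t * cexp (-μ * t)) l (𝓝 0) :=
    hlim.congr' (eventually_of_mem hl fun s hs => mul_cexp_neg_mul_eq_of_hasDerivAt hw hs ht)
  simpa [Complex.exp_ne_zero] using tendsto_nhds_unique tendsto_const_nhds hconst

lemma eqOn_zero_of_hasDerivAt_of_tendsto_atTop (hμ : 0 < μ.re)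
    (hw : ∀ t ∈ Ioi a, HasDerivAt w (μ * w t) t) (hlim : Tendsto w atTop (𝓝 0)) :
    EqOn w 0 (Ioi a) :=
  eqOn_zero_of_hasDerivAt_of_tendsto_mul_cexp hw (Ioi_mem_atTop a)
    (by simpa using hlim.mul (tendsto_cexp_neg_mul_atTop hμ))

lemma eqOn_zero_of_hasDerivAt_of_continuousWithinAt
    (hw : ∀ t ∈ Ioi a, HasDerivAt w (μ * w t) t) (hc : ContinuousWithinAt w (Ici a) a)
    (ha : w a = 0) : EqOn w 0 (Ici a) := by
  have hlim : Tendsto (fun t => w t * cexp (-μ * t)) (𝓝[>] a) (𝓝 0) := by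
    have := (hc.mono Ioi_subset_Ici_self).tendsto.mul
      ((hasDerivAt_cexp_neg_mul μ a).continuousAt.tendsto.mono_left nhdsWithin_le_nhds)
    simpa [ha] using this
  intro t ht
  rcases (mem_Ici.1 ht).eq_or_lt with rfl | ht
  · exact ha
  · exact eqOn_zero_of_hasDerivAt_of_tendsto_mul_cexp hw self_mem_nhdsWithin hlim ht

end FirstOrder

lemma eqOn_zero_of_hasDerivAt_of_mem_slitPlane {a : ℝ} {c : ℂ} {h h' h'' : ℝ → ℂ}
    (hc : c ∈ Complex.slitPlane)
    (hd : ∀ t ∈ Ioi a, HasDerivAt h (h' t) t) (hd' : ∀ t ∈ Ioi a, HasDerivAt h' (h'' t) t)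
    (hode : ∀ t ∈ Ioi a, h'' t = c * h t) (hcont : ContinuousWithinAt h (Ici a) a)
    (ha : h a = 0) (hlim : Tendsto h atTop (𝓝 0)) (hlim' : Tendsto h' atTop (𝓝 0)) :
    EqOn h 0 (Ici a) := by
  obtain ⟨μ, hμ, rfl⟩ := Complex.exists_sq_eq_of_mem_slitPlane hc
  have hw : EqOn (fun t => h' t + μ * h t) 0 (Ioi a) := by
    refine eqOn_zero_of_hasDerivAt_of_tendsto_atTop hμ (fun t ht => ?_)
      (by simpa using hlim'.add (hlim.const_mul μ))
    exact ((hd' t ht).add ((hd t ht).const_mul μ)).congr_deriv (by rw [hode t ht]; ring)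
  refine eqOn_zero_of_hasDerivAt_of_continuousWithinAt (μ := -μ) (fun t ht => ?_) hcont ha
  have hwt : h' t + μ * h t = 0 := hw ht
  exact (hd t ht).congr_deriv (by linear_combination hwt)

lemma shercliff_homogeneous_eqOn_zero {ξ : ℝ} (hξ : ξ ≠ 0) {U B U' B' U'' B'' : ℝ → ℂ}
    (hU : ∀ z ∈ Ioi 0, HasDerivAt U (U' z) z) (hU' : ∀ z ∈ Ioi 0, HasDerivAt U' (U'' z) z)
    (hB : ∀ z ∈ Ioi 0, HasDerivAt B (B' z) z) (hB' : ∀ z ∈ Ioi 0, HasDerivAt B' (B'' z) z)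
    (heq : ∀ z ∈ Ioi (0 : ℝ),
      Complex.I * ξ * B z + U'' z = 0 ∧ Complex.I * ξ * U z + B'' z = 0)
    (hcU : ContinuousWithinAt U (Ici 0) 0) (hcB : ContinuousWithinAt B (Ici 0) 0)
    (hU0 : U 0 = 0) (hB0 : B 0 = 0)
    (hlimU : Tendsto U atTop (𝓝 0)) (hlimB : Tendsto B atTop (𝓝 0))
    (hlimU' : Tendsto U' atTop (𝓝 0)) (hlimB' : Tendsto B' atTop (𝓝 0)) :
    EqOn U 0 (Ici 0) ∧ EqOn B 0 (Ici 0) := by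
  have hdecouple : ∀ σ : ℝ, σ ^ 2 = 1 → EqOn (fun z => U z + σ * B z) 0 (Ici 0) := by
    intro σ hσ
    have hσ' : (σ : ℂ) ^ 2 = 1 := by exact_mod_cast hσ
    have hslit : -(σ * Complex.I * ξ) ∈ Complex.slitPlane := by
      refine Complex.mem_slitPlane_iff.2 (Or.inr ?_)
      have hσ0 : σ ≠ 0 := by rintro rfl; norm_num at hσ
      simpa using mul_ne_zero hσ0 hξ
    refine eqOn_zero_of_hasDerivAt_of_mem_slitPlane hslit
      (fun z hz => (hU z hz).add ((hB z hz).const_mul _))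
      (fun z hz => (hU' z hz).add ((hB' z hz).const_mul _)) (fun z hz => ?_)
      (hcU.add (hcB.const_smul (σ : ℂ))) (by simp [hU0, hB0])
      (by simpa using hlimU.add (hlimB.const_mul _))
      (by simpa using hlimU'.add (hlimB'.const_mul _))
    obtain ⟨eU, eB⟩ := heq z hz
    linear_combination eU + σ * eB + Complex.I * ξ * B z * hσ'
  have hsum : ∀ z ∈ Ici (0 : ℝ), U z + B z = 0 := fun z hz => by
    simpa using hdecouple 1 (by norm_num) hz
  have hdiff : ∀ z ∈ Ici (0 : ℝ), U z - B z = 0 := fun z hz => by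
    simpa [sub_eq_add_neg] using hdecouple (-1) (by norm_num) hz
  exact ⟨fun z hz => show U z = 0 by linear_combination (hsum z hz + hdiff z hz) / 2,
    fun z hz => show B z = 0 by linear_combination (hsum z hz - hdiff z hz) / 2⟩

theorem stmt_3_general (ξ : ℝ) (hξ : ξ ≠ 0) (βinf : ℂ)
    (u₁ b₁ u₂ b₂ : ℝ → ℂ)
    (hu₁ : ContDiffOn ℝ 2 u₁ (Set.Ici 0)) (hb₁ : ContDiffOn ℝ 2 b₁ (Set.Ici 0))
    (hu₂ : ContDiffOn ℝ 2 u₂ (Set.Ici 0)) (hb₂ : ContDiffOn ℝ 2 b₂ (Set.Ici 0))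
    (heq₁ : ∀ z ∈ Set.Ioi (0:ℝ),
        Complex.I * (ξ : ℂ) * (b₁ z - βinf) + deriv (deriv u₁) z = 0 ∧
        Complex.I * (ξ : ℂ) * u₁ z + deriv (deriv b₁) z = 0)
    (heq₂ : ∀ z ∈ Set.Ioi (0:ℝ),
        Complex.I * (ξ : ℂ) * (b₂ z - βinf) + deriv (deriv u₂) z = 0 ∧
        Complex.I * (ξ : ℂ) * u₂ z + deriv (deriv b₂) z = 0)
    (hbc₁ : u₁ 0 = 0 ∧ b₁ 0 = 0) (hbc₂ : u₂ 0 = 0 ∧ b₂ 0 = 0)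
    (hlim₁ : Tendsto u₁ atTop (𝓝 0) ∧ Tendsto b₁ atTop (𝓝 βinf))
    (hlim₂ : Tendsto u₂ atTop (𝓝 0) ∧ Tendsto b₂ atTop (𝓝 βinf))
    (hlim'₁ : Tendsto (deriv u₁) atTop (𝓝 0) ∧ Tendsto (deriv b₁) atTop (𝓝 0))
    (hlim'₂ : Tendsto (deriv u₂) atTop (𝓝 0) ∧ Tendsto (deriv b₂) atTop (𝓝 0)) :
    ∀ z ∈ Set.Ici (0:ℝ), u₁ z = u₂ z ∧ b₁ z = b₂ z := by
  have hd : ∀ f : ℝ → ℂ, ContDiffOn ℝ 2 f (Ici 0) → ∀ z ∈ Ioi (0 : ℝ),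
      HasDerivAt f (deriv f z) z ∧ HasDerivAt (deriv f) (deriv (deriv f) z) z :=
    fun f hf z hz => (hf.mono Ioi_subset_Ici_self).hasDerivAt_and_hasDerivAt_deriv isOpen_Ioi hz
  have hc : ∀ f : ℝ → ℂ, ContDiffOn ℝ 2 f (Ici 0) → ContinuousWithinAt f (Ici 0) 0 :=
    fun f hf => hf.continuousOn 0 self_mem_Ici
  obtain ⟨hU, hB⟩ := shercliff_homogeneous_eqOn_zero hξ (U := fun z => u₁ z - u₂ z)
    (B := fun z => b₁ z - b₂ z)
    (fun z hz => (hd u₁ hu₁ z hz).1.sub (hd u₂ hu₂ z hz).1)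
    (fun z hz => (hd u₁ hu₁ z hz).2.sub (hd u₂ hu₂ z hz).2)
    (fun z hz => (hd b₁ hb₁ z hz).1.sub (hd b₂ hb₂ z hz).1)
    (fun z hz => (hd b₁ hb₁ z hz).2.sub (hd b₂ hb₂ z hz).2)
    (fun z hz => by
      obtain ⟨e₁, f₁⟩ := heq₁ z hz
      obtain ⟨e₂, f₂⟩ := heq₂ z hz
      exact ⟨by linear_combination e₁ - e₂, by linear_combination f₁ - f₂⟩)
    ((hc u₁ hu₁).sub (hc u₂ hu₂)) ((hc b₁ hb₁).sub (hc b₂ hb₂))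
    (by simp [hbc₁.1, hbc₂.1]) (by simp [hbc₁.2, hbc₂.2])
    (by simpa using hlim₁.1.sub hlim₂.1) (by simpa using hlim₁.2.sub hlim₂.2)
    (by simpa using hlim'₁.1.sub hlim'₂.1) (by simpa using hlim'₁.2.sub hlim'₂.2)
  exact fun z hz => ⟨sub_eq_zero.1 (hU hz), sub_eq_zero.1 (hB hz)⟩

/-- uniqueness of the bounded solution of the Fourier-transformed
Shercliff system: two C² solutions with the same boundary conditions and decay
coincide on `[0,∞)`. -/
theorem stmt_3 (ξ : ℝ) (hξ : ξ ≠ 0) (βinf : ℂ)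
    (u₁ b₁ u₂ b₂ : ℝ → ℂ)
    (hu₁ : ContDiffOn ℝ 2 u₁ (Set.Ici 0)) (hb₁ : ContDiffOn ℝ 2 b₁ (Set.Ici 0))
    (hu₂ : ContDiffOn ℝ 2 u₂ (Set.Ici 0)) (hb₂ : ContDiffOn ℝ 2 b₂ (Set.Ici 0))
    (hbdd₁ : Bornology.IsBounded (u₁ '' Set.Ici 0 ∪ b₁ '' Set.Ici 0))
    (hbdd₂ : Bornology.IsBounded (u₂ '' Set.Ici 0 ∪ b₂ '' Set.Ici 0))
    (heq₁ : ∀ z ∈ Set.Ioi (0:ℝ),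
        Complex.I * (ξ : ℂ) * (b₁ z - βinf) + deriv (deriv u₁) z = 0 ∧
        Complex.I * (ξ : ℂ) * u₁ z + deriv (deriv b₁) z = 0)
    (heq₂ : ∀ z ∈ Set.Ioi (0:ℝ),
        Complex.I * (ξ : ℂ) * (b₂ z - βinf) + deriv (deriv u₂) z = 0 ∧
        Complex.I * (ξ : ℂ) * u₂ z + deriv (deriv b₂) z = 0)
    (hbc₁ : u₁ 0 = 0 ∧ b₁ 0 = 0) (hbc₂ : u₂ 0 = 0 ∧ b₂ 0 = 0)
    (hlim₁ : Tendsto u₁ atTop (𝓝 0) ∧ Tendsto b₁ atTop (𝓝 βinf))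
    (hlim₂ : Tendsto u₂ atTop (𝓝 0) ∧ Tendsto b₂ atTop (𝓝 βinf))
    (hlim'₁ : Tendsto (deriv u₁) atTop (𝓝 0) ∧ Tendsto (deriv b₁) atTop (𝓝 0))
    (hlim'₂ : Tendsto (deriv u₂) atTop (𝓝 0) ∧ Tendsto (deriv b₂) atTop (𝓝 0)) :
    ∀ z ∈ Set.Ici (0:ℝ), u₁ z = u₂ z ∧ b₁ z = b₂ z :=
  stmt_3_general ξ hξ βinf u₁ b₁ u₂ b₂ hu₁ hb₁ hu₂ hb₂ heq₁ heq₂ hbc₁ hbc₂ hlim₁ hlim₂ hlim'₁ hlim'₂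
end

section
/- Let Ω = 𝕋 × (0,∞) (x periodic, z > 0). Suppose u : Ω → ℝ is smooth with u(x,0) = 0 and sufficient decay at z = ∞, and set v(x,z) = -∫₀^z ∂_x u(x,s) ds. If U : [0,∞) → ℝ satisfies z ↦ z U''(z) ∈ L^∞, then |∫_Ω U'' v u̅ dxdz| ≤ 2 ‖z U''‖_{L^∞} ‖∂_x u‖_{L²(Ω)} ‖u‖_{L²(Ω)} (where u̅ denotes any L² function ω with ‖ω‖_{L²} in place of ‖u‖; in particular the estimate holds with ω in place of the second u). -/
open Real Filter Topology MeasureTheory Set intervalIntegral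

lemma my_cs {α : Type*} [MeasurableSpace α] (μ : Measure α) (f g : α → ℝ)
    (hf : AEStronglyMeasurable f μ) (hg : AEStronglyMeasurable g μ)
    (hf2 : Integrable (fun a => f a ^ 2) μ) (hg2 : Integrable (fun a => g a ^ 2) μ) :
    ∫ a, |f a * g a| ∂μ ≤ Real.sqrt (∫ a, f a ^ 2 ∂μ) * Real.sqrt (∫ a, g a ^ 2 ∂μ) := by
  have hconj : (2:ℝ).HolderConjugate 2 := Real.HolderConjugate.two_two
  have hmf : MemLp (fun a => |f a|) (ENNReal.ofReal 2) μ := by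
    rw [show ENNReal.ofReal 2 = 2 by norm_num]
    refine (memLp_two_iff_integrable_sq hf.norm).2 ?_
    simpa [sq_abs] using hf2
  have hmg : MemLp (fun a => |g a|) (ENNReal.ofReal 2) μ := by
    rw [show ENNReal.ofReal 2 = 2 by norm_num]
    refine (memLp_two_iff_integrable_sq hg.norm).2 ?_
    simpa [sq_abs] using hg2
  have h := MeasureTheory.integral_mul_le_Lp_mul_Lq_of_nonneg hconj
    (f := fun a => |f a|) (g := fun a => |g a|)
    (Eventually.of_forall fun a => abs_nonneg _) (Eventually.of_forall fun a => abs_nonneg _)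
    hmf hmg
  have e1 : ∀ a, |f a| * |g a| = |f a * g a| := fun a => (abs_mul _ _).symm
  have e2 : ∀ (x : ℝ), |x| ^ (2:ℝ) = x ^ 2 := by
    intro x
    rw [show (2:ℝ) = ((2:ℕ):ℝ) by norm_num, Real.rpow_natCast, sq_abs]
  simp only [e1, e2] at h
  calc ∫ a, |f a * g a| ∂μ ≤ (∫ a, f a ^ 2 ∂μ) ^ (1/(2:ℝ)) * (∫ a, g a ^ 2 ∂μ) ^ (1/(2:ℝ)) := h
    _ = _ := by rw [Real.sqrt_eq_rpow, Real.sqrt_eq_rpow]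

lemma hardy_step (f : ℝ → ℝ) (hf : Continuous f) {ε T : ℝ} (hε : 0 < ε) (hT : ε ≤ T) :
    ∫ z in Ioc ε T, ((∫ s in (0:ℝ)..z, f s) / z) ^ 2 ≤
      (∫ z in (0:ℝ)..ε, f z ^ 2) +
        2 * Real.sqrt (∫ z in Ioc ε T, ((∫ s in (0:ℝ)..z, f s) / z) ^ 2) *
          Real.sqrt (∫ z in (0:ℝ)..T, f z ^ 2) := by
  set F : ℝ → ℝ := fun z => ∫ s in (0:ℝ)..z, f s with hFdef
  have hFd : ∀ z : ℝ, HasDerivAt F (f z) z := fun z =>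
    intervalIntegral.integral_hasDerivAt_right (hf.intervalIntegrable 0 z)
      hf.stronglyMeasurable.stronglyMeasurableAtFilter hf.continuousAt
  have hFc : Continuous F := intervalIntegral.continuous_primitive
    (fun a b => hf.intervalIntegrable a b) 0
  have hgc : ContinuousOn (fun z => (F z / z) ^ 2) (Icc ε T) := by
    apply ContinuousOn.pow
    exact (hFc.continuousOn.div continuousOn_id (fun z hz => ne_of_gt (lt_of_lt_of_le hε hz.1)))
  have hgint : IntegrableOn (fun z => (F z / z) ^ 2) (Ioc ε T) volume :=
    (hgc.integrableOn_Icc).mono_set Ioc_subset_Icc_self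
  have hf2intT : IntegrableOn (fun z => f z ^ 2) (Ioc ε T) volume :=
    ((hf.pow 2).continuousOn.integrableOn_Icc).mono_set Ioc_subset_Icc_self
  have huIcc : Set.uIcc ε T = Icc ε T := uIcc_of_le hT
  have hibp : ∫ z in ε..T, F z ^ 2 * ((z^2)⁻¹) =
      F T ^ 2 * (-T⁻¹) - F ε ^ 2 * (-ε⁻¹) - ∫ z in ε..T, (2 * F z * f z) * (-z⁻¹) := by
    have h1 : ∀ x ∈ Set.uIcc ε T, HasDerivAt (fun z => F z ^ 2) (2 * F x * f x) x := by
      intro x hx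
      have := (hFd x).fun_pow 2
      simpa [pow_one] using this
    have h2 : ∀ x ∈ Set.uIcc ε T, HasDerivAt (fun z : ℝ => -z⁻¹) ((x^2)⁻¹) x := by
      intro x hx
      rw [huIcc] at hx
      have hx0 : x ≠ 0 := ne_of_gt (lt_of_lt_of_le hε hx.1)
      simpa using (hasDerivAt_inv hx0).fun_neg
    have h3 : IntervalIntegrable (fun x => 2 * F x * f x) volume ε T := by
      apply Continuous.intervalIntegrable
      exact (continuous_const.mul hFc).mul hf
    have h4 : IntervalIntegrable (fun x : ℝ => (x^2)⁻¹) volume ε T := by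
      apply ContinuousOn.intervalIntegrable
      rw [huIcc]
      exact (continuousOn_id.pow 2).inv₀ (fun x hx => by
        have : x ≠ 0 := ne_of_gt (lt_of_lt_of_le hε hx.1)
        exact pow_ne_zero 2 this)
    exact intervalIntegral.integral_mul_deriv_eq_deriv_mul h1 h2 h3 h4
  have hLHS : (∫ z in Ioc ε T, (F z / z) ^ 2) = ∫ z in ε..T, F z ^ 2 * ((z^2)⁻¹) := by
    rw [intervalIntegral.integral_of_le hT]
    apply setIntegral_congr_fun measurableSet_Ioc
    intro z hz
    simp only [div_pow, div_eq_mul_inv, mul_pow, inv_pow]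
  have hT0 : (0:ℝ) < T := lt_of_lt_of_le hε hT
  have hAnn : (0:ℝ) ≤ ∫ z in Ioc ε T, (F z / z) ^ 2 :=
    setIntegral_nonneg measurableSet_Ioc (fun z _ => sq_nonneg _)
  have hCε : (0:ℝ) ≤ ∫ z in (0:ℝ)..ε, f z ^ 2 :=
    intervalIntegral.integral_nonneg hε.le (fun z _ => sq_nonneg _)
  have ht2 : F ε ^ 2 * ε⁻¹ ≤ ∫ z in (0:ℝ)..ε, f z ^ 2 := by
    have hFabs : |F ε| ≤ Real.sqrt (∫ z in (0:ℝ)..ε, f z ^ 2) * Real.sqrt ε := by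
      have h1 : F ε = ∫ z in Ioc (0:ℝ) ε, f z := intervalIntegral.integral_of_le hε.le
      have h2 := my_cs (volume.restrict (Ioc (0:ℝ) ε)) f (fun _ => (1:ℝ))
        hf.aestronglyMeasurable aestronglyMeasurable_const
        (((hf.pow 2).continuousOn.integrableOn_Icc).mono_set Ioc_subset_Icc_self)
        (integrableOn_const (by simp [hε]))
      simp only [mul_one, one_pow] at h2
      have h3 : ∫ z in Ioc (0:ℝ) ε, (1:ℝ) = ε := by
        simp [Real.volume_Ioc, hε.le]
      rw [h3] at h2
      calc |F ε| = |∫ z in Ioc (0:ℝ) ε, f z| := by rw [h1]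
        _ ≤ ‖∫ z in Ioc (0:ℝ) ε, f z‖ := le_of_eq (Real.norm_eq_abs _).symm
        _ ≤ ∫ z in Ioc (0:ℝ) ε, ‖f z‖ := norm_integral_le_integral_norm _
        _ = ∫ z in Ioc (0:ℝ) ε, |f z| := by simp only [Real.norm_eq_abs]
        _ ≤ _ := by
            rw [intervalIntegral.integral_of_le hε.le]
            exact h2
    have h4 : F ε ^ 2 ≤ (∫ z in (0:ℝ)..ε, f z ^ 2) * ε := by
      have := mul_self_le_mul_self (abs_nonneg (F ε)) hFabs
      calc F ε ^ 2 = |F ε| * |F ε| := by rw [← abs_mul, abs_mul_self]; ring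
        _ ≤ (Real.sqrt (∫ z in (0:ℝ)..ε, f z ^ 2) * Real.sqrt ε) *
            (Real.sqrt (∫ z in (0:ℝ)..ε, f z ^ 2) * Real.sqrt ε) := this
        _ = (∫ z in (0:ℝ)..ε, f z ^ 2) * ε := by
            rw [show ∀ a b : ℝ, (a*b)*(a*b) = (a*a)*(b*b) by intros; ring,
              Real.mul_self_sqrt hCε, Real.mul_self_sqrt hε.le]
    calc F ε ^ 2 * ε⁻¹ = F ε ^ 2 / ε := by rw [div_eq_mul_inv]
      _ ≤ _ := by rw [div_le_iff₀ hε]; exact h4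
  have hBT : (0:ℝ) ≤ ∫ z in (0:ℝ)..T, f z ^ 2 :=
    intervalIntegral.integral_nonneg hT0.le (fun z _ => sq_nonneg _)
  have ht3 : ∫ z in ε..T, 2 * F z * f z * z⁻¹ ≤
      2 * Real.sqrt (∫ z in Ioc ε T, (F z / z) ^ 2) * Real.sqrt (∫ z in (0:ℝ)..T, f z ^ 2) := by
    have hmeas : AEStronglyMeasurable (fun z => F z / z) (volume.restrict (Ioc ε T)) :=
      (hFc.measurable.div measurable_id).aestronglyMeasurable
    have hcs := my_cs (volume.restrict (Ioc ε T)) (fun z => F z / z) f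
      hmeas hf.aestronglyMeasurable hgint hf2intT
    have hsub : Real.sqrt (∫ z in Ioc ε T, f z ^ 2) ≤
        Real.sqrt (∫ z in (0:ℝ)..T, f z ^ 2) := by
      apply Real.sqrt_le_sqrt
      rw [intervalIntegral.integral_of_le hT0.le]
      apply setIntegral_mono_set
      · exact ((hf.pow 2).continuousOn.integrableOn_Icc).mono_set Ioc_subset_Icc_self
      · exact Eventually.of_forall (fun z => sq_nonneg _)
      · exact Eventually.of_forall (Ioc_subset_Ioc hε.le le_rfl)
    calc ∫ z in ε..T, 2 * F z * f z * z⁻¹ = 2 * ∫ z in Ioc ε T, (F z / z) * f z := by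
          rw [intervalIntegral.integral_of_le hT, ← MeasureTheory.integral_const_mul]
          apply setIntegral_congr_fun measurableSet_Ioc
          intro z hz
          field_simp
      _ ≤ 2 * ∫ z in Ioc ε T, |(F z / z) * f z| := by
          apply mul_le_mul_of_nonneg_left _ (by norm_num)
          calc _ ≤ |∫ z in Ioc ε T, (F z / z) * f z| := le_abs_self _
            _ ≤ ‖∫ z in Ioc ε T, (F z / z) * f z‖ := le_of_eq (Real.norm_eq_abs _).symm
            _ ≤ ∫ z in Ioc ε T, ‖(F z / z) * f z‖ := norm_integral_le_integral_norm _
            _ = _ := by simp only [Real.norm_eq_abs]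
      _ ≤ 2 * (Real.sqrt (∫ z in Ioc ε T, (F z / z) ^ 2) *
            Real.sqrt (∫ z in Ioc ε T, f z ^ 2)) := by
          apply mul_le_mul_of_nonneg_left _ (by norm_num)
          exact hcs
      _ ≤ _ := by
          rw [mul_assoc]
          apply mul_le_mul_of_nonneg_left _ (by norm_num)
          exact mul_le_mul_of_nonneg_left hsub (Real.sqrt_nonneg _)
  have ht1 : F T ^ 2 * (-T⁻¹) ≤ 0 := by
    apply mul_nonpos_of_nonneg_of_nonpos (sq_nonneg _)
    simp [inv_nonneg.2 hT0.le]
  have hneg : ∫ z in ε..T, (2 * F z * f z) * (-z⁻¹) = - ∫ z in ε..T, 2 * F z * f z * z⁻¹ := by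
    rw [← intervalIntegral.integral_neg]
    apply intervalIntegral.integral_congr
    intro z hz
    ring
  have hmain : (∫ z in Ioc ε T, (F z / z) ^ 2) =
      F T ^ 2 * (-T⁻¹) + F ε ^ 2 * ε⁻¹ + ∫ z in ε..T, 2 * F z * f z * z⁻¹ := by
    rw [hLHS, hibp, hneg]
    ring
  linarith [ht1, ht2, ht3, hmain]

lemma hardy_lintegral (f : ℝ → ℝ) (hf : Continuous f) :
    ∫⁻ z in Ioi (0:ℝ), ENNReal.ofReal (((∫ s in (0:ℝ)..z, f s) / z) ^ 2) ≤
      4 * ∫⁻ z in Ioi (0:ℝ), ENNReal.ofReal (f z ^ 2) := by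
  by_cases hfin : (∫⁻ z in Ioi (0:ℝ), ENNReal.ofReal (f z ^ 2)) = ⊤
  · rw [hfin, ENNReal.mul_top (by norm_num)]
    exact le_top
  -- integrability of f² on Ioi 0
  have hint : IntegrableOn (fun z => f z ^ 2) (Ioi (0:ℝ)) volume := by
    refine ⟨(hf.pow 2).aestronglyMeasurable, ?_⟩
    rw [hasFiniteIntegral_iff_ofReal (Eventually.of_forall fun z => sq_nonneg _)]
    exact lt_top_iff_ne_top.2 hfin
  set B : ℝ := ∫ z in Ioi (0:ℝ), f z ^ 2 with hBdef
  have hBnn : 0 ≤ B := setIntegral_nonneg measurableSet_Ioi (fun z _ => sq_nonneg _)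
  have hBof : (∫⁻ z in Ioi (0:ℝ), ENNReal.ofReal (f z ^ 2)) = ENNReal.ofReal B :=
    (ofReal_integral_eq_lintegral_ofReal hint
      (Eventually.of_forall fun z => sq_nonneg _)).symm
  set F : ℝ → ℝ := fun z => ∫ s in (0:ℝ)..z, f s with hFdef
  have hFc : Continuous F := intervalIntegral.continuous_primitive
    (fun a b => hf.intervalIntegrable a b) 0
  set g : ℝ → ℝ := fun z => (F z / z) ^ 2 with hgdef
  -- the exhausting sets
  set s : ℕ → Set ℝ := fun n => Ioc (1/((n:ℝ)+1)) ((n:ℝ)+1) with hsdef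
  have hεpos : ∀ n : ℕ, (0:ℝ) < 1/((n:ℝ)+1) := fun n => by positivity
  have hεT : ∀ n : ℕ, 1/((n:ℝ)+1) ≤ ((n:ℝ)+1) := by
    intro n
    calc 1/((n:ℝ)+1) ≤ 1 := by
          rw [div_le_one (by positivity)]; exact le_add_of_nonneg_left (Nat.cast_nonneg n)
      _ ≤ (n:ℝ)+1 := le_add_of_nonneg_left (Nat.cast_nonneg n)
  have hmono : Monotone s := by
    intro a b hab
    apply Ioc_subset_Ioc
    · apply one_div_le_one_div_of_le (by positivity)
      exact add_le_add_left (Nat.cast_le.2 hab) 1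
    · exact add_le_add_left (Nat.cast_le.2 hab) 1
  have hunion : ⋃ n, s n = Ioi (0:ℝ) := by
    ext z
    simp only [mem_iUnion, hsdef, mem_Ioc, mem_Ioi]
    constructor
    · rintro ⟨n, h1, h2⟩
      exact lt_trans (hεpos n) h1
    · intro hz
      obtain ⟨n, hn⟩ := exists_nat_gt (max (1/z) z)
      have h1 : 1/z < (n:ℝ) := lt_of_le_of_lt (le_max_left _ _) hn
      have h2 : z < (n:ℝ) := lt_of_le_of_lt (le_max_right _ _) hn
      refine ⟨n, ?_, le_of_lt (lt_trans h2 (lt_add_one _))⟩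
      rw [div_lt_iff₀ (by positivity)]
      rw [div_lt_iff₀ hz] at h1
      nlinarith
  -- truncated integrals
  have hgcont : ∀ n : ℕ, IntegrableOn g (s n) volume := by
    intro n
    have : ContinuousOn g (Icc (1/((n:ℝ)+1)) ((n:ℝ)+1)) := by
      apply ContinuousOn.pow
      exact hFc.continuousOn.div continuousOn_id
        (fun z hz => ne_of_gt (lt_of_lt_of_le (hεpos n) hz.1))
    exact this.integrableOn_Icc.mono_set Ioc_subset_Icc_self
  set A : ℕ → ℝ := fun n => ∫ z in s n, g z with hAdef
  have hAnn : ∀ n, 0 ≤ A n := fun n =>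
    setIntegral_nonneg measurableSet_Ioc (fun z _ => sq_nonneg _)
  have hAmono : Monotone A := by
    intro a b hab
    apply setIntegral_mono_set (hgcont b)
      (Eventually.of_forall fun z => sq_nonneg _)
      (Eventually.of_forall fun z hz => hmono hab hz)
  -- bounds from hardy_step
  have hBn : ∀ T : ℝ, 0 < T → (∫ z in (0:ℝ)..T, f z ^ 2) ≤ B := by
    intro T hT
    rw [intervalIntegral.integral_of_le hT.le]
    apply setIntegral_mono_set hint (Eventually.of_forall fun z => sq_nonneg _)
      (Eventually.of_forall fun z hz => hz.1)
  have hBnnn : ∀ T : ℝ, 0 < T → (0:ℝ) ≤ ∫ z in (0:ℝ)..T, f z ^ 2 := fun T hT =>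
    intervalIntegral.integral_nonneg hT.le (fun z _ => sq_nonneg _)
  have hkey : ∀ n : ℕ, A n ≤ (∫ z in (0:ℝ)..(1/((n:ℝ)+1)), f z ^ 2) +
      2 * Real.sqrt (A n) * Real.sqrt B := by
    intro n
    have h := hardy_step f hf (hεpos n) (hεT n)
    have h2 : Real.sqrt (∫ z in (0:ℝ)..((n:ℝ)+1), f z ^ 2) ≤ Real.sqrt B :=
      Real.sqrt_le_sqrt (hBn _ (lt_of_lt_of_le (hεpos n) (hεT n)))
    calc A n ≤ (∫ z in (0:ℝ)..(1/((n:ℝ)+1)), f z ^ 2) +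
          2 * Real.sqrt (A n) * Real.sqrt (∫ z in (0:ℝ)..((n:ℝ)+1), f z ^ 2) := h
      _ ≤ _ := by
          apply add_le_add_right
          exact mul_le_mul_of_nonneg_left h2
            (by positivity)
  have hbd : ∀ n, A n ≤ 9 * B := by
    intro n
    have h := hkey n
    have hC : (∫ z in (0:ℝ)..(1/((n:ℝ)+1)), f z ^ 2) ≤ B := hBn _ (hεpos n)
    have h1 : Real.sqrt (A n) ^ 2 = A n := Real.sq_sqrt (hAnn n)
    have h2 : Real.sqrt B ^ 2 = B := Real.sq_sqrt hBnn
    nlinarith [Real.sqrt_nonneg (A n), Real.sqrt_nonneg B,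
      sq_nonneg (Real.sqrt (A n) - 3 * Real.sqrt B)]
  have hbdd : BddAbove (Set.range A) := ⟨9 * B, by rintro x ⟨n, rfl⟩; exact hbd n⟩
  set L : ℝ := ⨆ n, A n with hLdef
  have hAL : Tendsto A atTop (𝓝 L) := tendsto_atTop_ciSup hAmono hbdd
  have hLnn : 0 ≤ L := le_trans (hAnn 0) (le_ciSup hbdd 0)
  -- C n → 0
  have hC0 : Tendsto (fun n : ℕ => ∫ z in (0:ℝ)..(1/((n:ℝ)+1)), f z ^ 2) atTop (𝓝 0) := by
    have hGc : Continuous (fun t : ℝ => ∫ z in (0:ℝ)..t, f z ^ 2) :=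
      intervalIntegral.continuous_primitive (fun a b => (hf.pow 2).intervalIntegrable a b) 0
    have hseq : Tendsto (fun n : ℕ => 1/((n:ℝ)+1)) atTop (𝓝 0) :=
      tendsto_one_div_add_atTop_nhds_zero_nat
    have := (hGc.tendsto 0).comp hseq
    simpa [Function.comp_def] using this
  -- pass to the limit
  have hL2 : L ≤ 0 + 2 * Real.sqrt L * Real.sqrt B := by
    apply le_of_tendsto_of_tendsto' hAL ?_ hkey
    apply Tendsto.add hC0
    exact (((Real.continuous_sqrt.tendsto L).comp hAL).const_mul 2).mul_const _
  have hL4 : L ≤ 4 * B := by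
    have h1 : Real.sqrt L ^ 2 = L := Real.sq_sqrt hLnn
    have h2 : Real.sqrt B ^ 2 = B := Real.sq_sqrt hBnn
    nlinarith [Real.sqrt_nonneg L, Real.sqrt_nonneg B,
      sq_nonneg (Real.sqrt L - 2 * Real.sqrt B)]
  -- convert to lintegrals
  have hAof : ∀ n : ℕ, (∫⁻ z in s n, ENNReal.ofReal (g z)) = ENNReal.ofReal (A n) := by
    intro n
    exact (ofReal_integral_eq_lintegral_ofReal (hgcont n)
      (Eventually.of_forall fun z => sq_nonneg _)).symm
  calc ∫⁻ z in Ioi (0:ℝ), ENNReal.ofReal (((∫ s in (0:ℝ)..z, f s) / z) ^ 2)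
      = ∫⁻ z in ⋃ n, s n, ENNReal.ofReal (g z) := by rw [hunion]
    _ = ⨆ n, ∫⁻ z in s n, ENNReal.ofReal (g z) :=
        setLIntegral_iUnion_of_directed _ hmono.directed_le
    _ ≤ ENNReal.ofReal (4 * B) := by
        apply iSup_le
        intro n
        rw [hAof n]
        exact ENNReal.ofReal_le_ofReal (le_trans (le_ciSup hbdd n) hL4)
    _ = 4 * ENNReal.ofReal B := by
        rw [ENNReal.ofReal_mul (by norm_num)]
        norm_num
    _ = _ := by rw [hBof]

lemma prod_int {α : Type*} [MeasurableSpace α] (μ : Measure α) (f g : α → ℝ)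
    (hf : AEStronglyMeasurable f μ) (hg : AEStronglyMeasurable g μ)
    (hf2 : Integrable (fun a => f a ^ 2) μ) (hg2 : Integrable (fun a => g a ^ 2) μ) :
    Integrable (fun a => f a * g a) μ := by
  refine Integrable.mono' (g := fun a => (f a ^ 2 + g a ^ 2) / 2)
    ((hf2.add hg2).div_const 2) (hf.mul hg) ?_
  refine Eventually.of_forall fun a => ?_
  rw [Real.norm_eq_abs, abs_mul]
  nlinarith [sq_nonneg (|f a| - |g a|), sq_abs (f a), sq_abs (g a), abs_nonneg (f a),
    abs_nonneg (g a)]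


/-- The boundary-layer domain `Ω = 𝕋 × (0,∞)`, modeled as `(0,1] × (0,∞)` with
functions periodic of period 1 in the first variable. -/
noncomputable def μΩ : Measure (ℝ × ℝ) :=
  (volume.restrict (Ioc (0:ℝ) 1)).prod (volume.restrict (Ioi (0:ℝ)))

/-- tangential derivative -/
noncomputable def dX (f : ℝ → ℝ → ℝ) (x z : ℝ) : ℝ := deriv (fun x' => f x' z) x

/-- normal derivative -/
noncomputable def dZ (f : ℝ → ℝ → ℝ) (x z : ℝ) : ℝ := deriv (fun z' => f x z') z

/-- squared L² norm on Ω -/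
noncomputable def sqL2 (f : ℝ → ℝ → ℝ) : ℝ := ∫ p, (f p.1 p.2)^2 ∂μΩ

/-- Hardy-type estimate for the stretching term:
`|∫_Ω U'' v ω| ≤ 2 ‖z U''‖_∞ ‖∂_x u‖_{L²} ‖ω‖_{L²}` where `v = -∫₀^z ∂_x u`. -/
theorem stmt_4 (u ω : ℝ → ℝ → ℝ) (U : ℝ → ℝ) (v : ℝ → ℝ → ℝ) (M : ℝ)
    (hsm : ContDiff ℝ (⊤ : ℕ∞) (fun p : ℝ × ℝ => u p.1 p.2))
    (hUsm : ContDiff ℝ (⊤ : ℕ∞) U)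
    (hper : ∀ z, Function.Periodic (fun x => u x z) 1)
    (hu0 : ∀ x, u x 0 = 0)
    (hdec : ∀ x, Tendsto (fun z => u x z) atTop (𝓝 0))
    (hv : ∀ x z, v x z = -∫ s in (0:ℝ)..z, dX u x s)
    (hM : 0 ≤ M) (hzU'' : ∀ z ∈ Ici (0:ℝ), |z * deriv (deriv U) z| ≤ M)
    (hint : Integrable (fun p : ℝ × ℝ => deriv (deriv U) p.2 * v p.1 p.2 * ω p.1 p.2) μΩ)
    (hux : Integrable (fun p : ℝ × ℝ => (dX u p.1 p.2)^2) μΩ)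
    (hω : Integrable (fun p : ℝ × ℝ => (ω p.1 p.2)^2) μΩ) :
    |∫ p, deriv (deriv U) p.2 * v p.1 p.2 * ω p.1 p.2 ∂μΩ| ≤
      2 * M * Real.sqrt (sqL2 (dX u)) * Real.sqrt (sqL2 ω) := by
  -- continuity of dX u
  set w : ℝ × ℝ → ℝ := fun p => u p.1 p.2 with hwdef
  have hdXeq : ∀ x z : ℝ, dX u x z = fderiv ℝ w (x, z) (1, 0) := by
    intro x z
    have h1 : HasFDerivAt w (fderiv ℝ w (x, z)) (x, z) :=
      (hsm.differentiable (by simp) (x, z)).hasFDerivAt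
    have h2 : HasDerivAt (fun x' : ℝ => ((x', z) : ℝ × ℝ)) (1, 0) x :=
      (hasDerivAt_id x).prodMk (hasDerivAt_const x z)
    have h3 := h1.comp_hasDerivAt x h2
    exact h3.deriv
  have hdxc : Continuous (fun p : ℝ × ℝ => dX u p.1 p.2) := by
    have h1 : Continuous fun p : ℝ × ℝ => (fderiv ℝ w p) (1, 0) := by
      have := hsm.continuous_fderiv_apply (by simp)
      exact this.comp (continuous_id.prodMk continuous_const)
    have h2 : (fun p : ℝ × ℝ => dX u p.1 p.2) = fun p => (fderiv ℝ w p) (1, 0) := by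
      funext p
      exact hdXeq p.1 p.2
    rw [h2]; exact h1
  have hdxx : ∀ x : ℝ, Continuous (fun s => dX u x s) :=
    fun x => hdxc.comp (continuous_const.prodMk continuous_id)
  -- continuity of v
  have hveq : (fun p : ℝ × ℝ => v p.1 p.2) = fun p => -∫ s in (0:ℝ)..p.2, dX u p.1 s :=
    funext fun p => hv p.1 p.2
  have hvc : Continuous (fun p : ℝ × ℝ => v p.1 p.2) := by
    rw [hveq]
    exact (intervalIntegral.continuous_parametric_primitive_of_continuous
      (f := dX u) (μ := volume) (a₀ := 0) hdxc).neg
  have hgv : Measurable (fun p : ℝ × ℝ => v p.1 p.2 / p.2) :=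
    hvc.measurable.div measurable_snd
  -- key lintegral bound
  have hsqnn : 0 ≤ sqL2 (dX u) := integral_nonneg (fun p => sq_nonneg _)
  have hq : (∫⁻ p, ENNReal.ofReal ((v p.1 p.2 / p.2) ^ 2) ∂μΩ) ≤
      ENNReal.ofReal (4 * sqL2 (dX u)) := by
    have hmq : Measurable fun p : ℝ × ℝ => ENNReal.ofReal ((v p.1 p.2 / p.2) ^ 2) :=
      ((hgv.pow_const 2).ennreal_ofReal)
    have hmx : Measurable fun p : ℝ × ℝ => ENNReal.ofReal ((dX u p.1 p.2) ^ 2) :=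
      ((hdxc.measurable.pow_const 2).ennreal_ofReal)
    unfold μΩ at *
    rw [MeasureTheory.lintegral_prod _ hmq.aemeasurable]
    have hinner : ∀ x : ℝ, (∫⁻ z in Ioi (0:ℝ), ENNReal.ofReal ((v x z / z) ^ 2)) ≤
        4 * ∫⁻ z in Ioi (0:ℝ), ENNReal.ofReal ((dX u x z) ^ 2) := by
      intro x
      have heq : ∀ z : ℝ, (v x z / z) ^ 2 = ((∫ s in (0:ℝ)..z, dX u x s) / z) ^ 2 := by
        intro z
        rw [hv x z, neg_div, neg_sq]
      simp only [heq]
      exact hardy_lintegral _ (hdxx x)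
    calc ∫⁻ x in Ioc (0:ℝ) 1, ∫⁻ z in Ioi (0:ℝ), ENNReal.ofReal ((v x z / z) ^ 2)
        ≤ ∫⁻ x in Ioc (0:ℝ) 1, 4 * ∫⁻ z in Ioi (0:ℝ), ENNReal.ofReal ((dX u x z) ^ 2) :=
          lintegral_mono (fun x => hinner x)
      _ = 4 * ∫⁻ x in Ioc (0:ℝ) 1, ∫⁻ z in Ioi (0:ℝ), ENNReal.ofReal ((dX u x z) ^ 2) :=
          lintegral_const_mul' _ _ (by norm_num)
      _ = 4 * ∫⁻ p, ENNReal.ofReal ((dX u p.1 p.2) ^ 2)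
            ∂((volume.restrict (Ioc (0:ℝ) 1)).prod (volume.restrict (Ioi (0:ℝ)))) := by
          rw [MeasureTheory.lintegral_prod _ hmx.aemeasurable]
      _ = 4 * ENNReal.ofReal (sqL2 (dX u)) := by
          rw [← ofReal_integral_eq_lintegral_ofReal hux
            (Eventually.of_forall fun p => sq_nonneg _)]
          rfl
      _ = ENNReal.ofReal (4 * sqL2 (dX u)) := by
          rw [ENNReal.ofReal_mul (by norm_num)]
          norm_num
  have hq2 : Integrable (fun p : ℝ × ℝ => (v p.1 p.2 / p.2) ^ 2) μΩ := by
    refine ⟨((hgv.pow_const 2)).aestronglyMeasurable, ?_⟩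
    rw [hasFiniteIntegral_iff_ofReal (Eventually.of_forall fun p => sq_nonneg _)]
    exact lt_of_le_of_lt hq ENNReal.ofReal_lt_top
  have hq3 : (∫ p, (v p.1 p.2 / p.2) ^ 2 ∂μΩ) ≤ 4 * sqL2 (dX u) := by
    rw [integral_eq_lintegral_of_nonneg_ae (Eventually.of_forall fun p => sq_nonneg _)
      ((hgv.pow_const 2)).aestronglyMeasurable]
    calc (∫⁻ p, ENNReal.ofReal ((v p.1 p.2 / p.2) ^ 2) ∂μΩ).toReal
        ≤ (ENNReal.ofReal (4 * sqL2 (dX u))).toReal :=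
          ENNReal.toReal_mono ENNReal.ofReal_ne_top hq
      _ = 4 * sqL2 (dX u) := ENNReal.toReal_ofReal (by positivity)
  -- a.e. positivity of the second coordinate
  have hae : ∀ᵐ p ∂μΩ, 0 < p.2 := by
    rw [ae_iff]
    have hset : {p : ℝ × ℝ | ¬ 0 < p.2} = univ ×ˢ (Iic (0:ℝ)) := by
      ext p; simp [not_lt]
    unfold μΩ
    rw [hset, Measure.prod_prod, Measure.restrict_apply measurableSet_Iic]
    have : Iic (0:ℝ) ∩ Ioi 0 = ∅ := by
      ext z; simp only [mem_inter_iff, mem_Iic, mem_Ioi, mem_empty_iff_false, iff_false]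
      rintro ⟨h1, h2⟩; linarith
    rw [this]
    simp
  -- |ω| is a.e. strongly measurable
  have hωabs : AEStronglyMeasurable (fun p : ℝ × ℝ => |ω p.1 p.2|) μΩ := by
    have h1 : AEStronglyMeasurable (fun p : ℝ × ℝ => Real.sqrt ((ω p.1 p.2) ^ 2)) μΩ :=
      Real.continuous_sqrt.comp_aestronglyMeasurable hω.1
    simpa [Real.sqrt_sq_eq_abs] using h1
  have hωabs2 : Integrable (fun p : ℝ × ℝ => |ω p.1 p.2| ^ 2) μΩ := by
    simpa [sq_abs] using hω
  -- chain of inequalities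
  have hRHSint : Integrable (fun p : ℝ × ℝ =>
      M * |(v p.1 p.2 / p.2) * (abs (ω p.1 p.2))|) μΩ := by
    exact ((prod_int μΩ _ _ hgv.aestronglyMeasurable hωabs hq2 hωabs2).abs).const_mul M
  have h1 : |∫ p, deriv (deriv U) p.2 * v p.1 p.2 * ω p.1 p.2 ∂μΩ| ≤
      ∫ p, |deriv (deriv U) p.2 * v p.1 p.2 * ω p.1 p.2| ∂μΩ := by
    calc _ ≤ ‖∫ p, deriv (deriv U) p.2 * v p.1 p.2 * ω p.1 p.2 ∂μΩ‖ :=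
          le_of_eq (Real.norm_eq_abs _).symm
      _ ≤ ∫ p, ‖deriv (deriv U) p.2 * v p.1 p.2 * ω p.1 p.2‖ ∂μΩ :=
          norm_integral_le_integral_norm _
      _ = _ := by simp only [Real.norm_eq_abs]
  have h2 : (∫ p, |deriv (deriv U) p.2 * v p.1 p.2 * ω p.1 p.2| ∂μΩ) ≤
      ∫ p, M * |(v p.1 p.2 / p.2) * (abs (ω p.1 p.2))| ∂μΩ := by
    apply integral_mono_of_nonneg (Eventually.of_forall fun p => abs_nonneg _) hRHSint
    filter_upwards [hae] with p hp
    have hz : p.2 ≠ 0 := ne_of_gt hp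
    have hU : |p.2 * deriv (deriv U) p.2| ≤ M := hzU'' p.2 (le_of_lt hp)
    calc |deriv (deriv U) p.2 * v p.1 p.2 * ω p.1 p.2|
        = |p.2 * deriv (deriv U) p.2| * |v p.1 p.2 / p.2| * |ω p.1 p.2| := by
          rw [← abs_mul, ← abs_mul]
          congr 1
          field_simp
      _ ≤ M * |v p.1 p.2 / p.2| * |ω p.1 p.2| := by
          apply mul_le_mul_of_nonneg_right _ (abs_nonneg _)
          exact mul_le_mul_of_nonneg_right hU (abs_nonneg _)
      _ = M * |(v p.1 p.2 / p.2) * (abs (ω p.1 p.2))| := by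
          rw [abs_mul, abs_abs, mul_assoc]
  have h3 : (∫ p, |(v p.1 p.2 / p.2) * (abs (ω p.1 p.2))| ∂μΩ) ≤
      Real.sqrt (∫ p, (v p.1 p.2 / p.2) ^ 2 ∂μΩ) *
        Real.sqrt (∫ p, |ω p.1 p.2| ^ 2 ∂μΩ) :=
    my_cs μΩ _ _ hgv.aestronglyMeasurable hωabs hq2 hωabs2
  have h4 : Real.sqrt (∫ p, (v p.1 p.2 / p.2) ^ 2 ∂μΩ) ≤ 2 * Real.sqrt (sqL2 (dX u)) := by
    calc Real.sqrt (∫ p, (v p.1 p.2 / p.2) ^ 2 ∂μΩ)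
        ≤ Real.sqrt (4 * sqL2 (dX u)) := Real.sqrt_le_sqrt hq3
      _ = 2 * Real.sqrt (sqL2 (dX u)) := by
          rw [show (4:ℝ) * sqL2 (dX u) = 2^2 * sqL2 (dX u) by norm_num,
            Real.sqrt_mul (by positivity), Real.sqrt_sq (by norm_num)]
  have h5 : Real.sqrt (∫ p, |ω p.1 p.2| ^ 2 ∂μΩ) = Real.sqrt (sqL2 ω) := by
    congr 1
    simp only [sq_abs]
    rfl
  calc |∫ p, deriv (deriv U) p.2 * v p.1 p.2 * ω p.1 p.2 ∂μΩ|
      ≤ ∫ p, |deriv (deriv U) p.2 * v p.1 p.2 * ω p.1 p.2| ∂μΩ := h1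
    _ ≤ ∫ p, M * |(v p.1 p.2 / p.2) * (abs (ω p.1 p.2))| ∂μΩ := h2
    _ = M * ∫ p, |(v p.1 p.2 / p.2) * (abs (ω p.1 p.2))| ∂μΩ := integral_const_mul M _
    _ ≤ M * (Real.sqrt (∫ p, (v p.1 p.2 / p.2) ^ 2 ∂μΩ) *
          Real.sqrt (∫ p, |ω p.1 p.2| ^ 2 ∂μΩ)) := by
        apply mul_le_mul_of_nonneg_left h3 hM
    _ ≤ M * ((2 * Real.sqrt (sqL2 (dX u))) * Real.sqrt (sqL2 ω)) := by
        rw [h5]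
        apply mul_le_mul_of_nonneg_left _ hM
        exact mul_le_mul_of_nonneg_right h4 (Real.sqrt_nonneg _)
    _ = 2 * M * Real.sqrt (sqL2 (dX u)) * Real.sqrt (sqL2 ω) := by ring
end

section
/- Let Ω = 𝕋 × (0,∞). Suppose u, b : Ω → ℝ are smooth with u(x,0) = b(x,0) = 0, decay as z → ∞, b is periodic in x, and they satisfy the Shercliff constraint ∂_x u + ∂²_z b = 0. Then ∫_Ω (∂_x ∂_z b) (∂_z u) dx dz = -∫_Ω |∂_x u|² dx dz. -/
open Real Filter Topology MeasureTheory Set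

open Metric


noncomputable def pd (e : ℝ × ℝ) (F : ℝ × ℝ → ℝ) : ℝ × ℝ → ℝ := fun p => fderiv ℝ F p e

lemma contDiff_pd {F : ℝ × ℝ → ℝ} (hF : ContDiff ℝ (⊤ : ℕ∞) F) (e : ℝ × ℝ) :
    ContDiff ℝ (⊤ : ℕ∞) (pd e F) :=
  (hF.fderiv_right (by simp)).clm_apply contDiff_const

lemma hasDerivAt_slice1 {F : ℝ × ℝ → ℝ} (hF : ContDiff ℝ (⊤ : ℕ∞) F) (x z : ℝ) :
    HasDerivAt (fun x' => F (x', z)) (pd (1,0) F (x,z)) x := by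
  have h1 : HasFDerivAt F (fderiv ℝ F (x,z)) (x,z) :=
    (hF.differentiable (by simp) (x,z)).hasFDerivAt
  have h2 : HasDerivAt (fun x' : ℝ => ((x':ℝ), z)) ((1:ℝ), (0:ℝ)) x :=
    (hasDerivAt_id x).prodMk (hasDerivAt_const x z)
  exact h1.comp_hasDerivAt x h2

lemma hasDerivAt_slice2 {F : ℝ × ℝ → ℝ} (hF : ContDiff ℝ (⊤ : ℕ∞) F) (x z : ℝ) :
    HasDerivAt (fun z' => F (x, z')) (pd (0,1) F (x,z)) z := by
  have h1 : HasFDerivAt F (fderiv ℝ F (x,z)) (x,z) :=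
    (hF.differentiable (by simp) (x,z)).hasFDerivAt
  have h2 : HasDerivAt (fun z' : ℝ => (x, z')) ((0:ℝ), (1:ℝ)) z :=
    (hasDerivAt_const z x).prodMk (hasDerivAt_id z)
  exact h1.comp_hasDerivAt z h2

lemma pd_eval {F : ℝ × ℝ → ℝ} (hF : ContDiff ℝ (⊤ : ℕ∞) F) (e e' : ℝ × ℝ) (p : ℝ × ℝ) :
    pd e' (pd e F) p = (fderiv ℝ (fderiv ℝ F) p e') e := by
  have hd : HasFDerivAt (fderiv ℝ F) (fderiv ℝ (fderiv ℝ F) p) p :=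
    ((hF.fderiv_right (m := (⊤ : ℕ∞)) (by simp)).differentiable (by simp) p).hasFDerivAt
  have h2 : HasFDerivAt (fun q => fderiv ℝ F q e)
      ((ContinuousLinearMap.apply ℝ ℝ e).comp (fderiv ℝ (fderiv ℝ F) p)) p :=
    (ContinuousLinearMap.apply ℝ ℝ e).hasFDerivAt.comp p hd
  show fderiv ℝ (fun q => fderiv ℝ F q e) p e' = _
  rw [h2.fderiv]
  rfl

lemma pd_comm {F : ℝ × ℝ → ℝ} (hF : ContDiff ℝ (⊤ : ℕ∞) F) (e e' : ℝ × ℝ) (p : ℝ × ℝ) :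
    pd e' (pd e F) p = pd e (pd e' F) p := by
  rw [pd_eval hF, pd_eval hF]
  exact (second_derivative_symmetric
    (fun y => (hF.differentiable (by simp) y).hasFDerivAt)
    ((hF.fderiv_right (m := (⊤ : ℕ∞)) (by simp)).differentiable (by simp) p).hasFDerivAt e e').symm

noncomputable def μX : Measure ℝ := volume.restrict (Ioc (0:ℝ) 1)

instance : IsFiniteMeasure μX := by
  constructor
  rw [μX, Measure.restrict_apply_univ]
  simp [Real.volume_Ioc]

lemma integrable_cont {f : ℝ → ℝ} (hf : Continuous f) : Integrable f μX :=
  hf.integrableOn_Ioc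

/-- bound on the compact strip -/
lemma strip_bound (g : ℝ × ℝ → ℝ) (hg : Continuous g) (z₀ : ℝ) :
    ∃ C : ℝ, ∀ x ∈ Icc (0:ℝ) 1, ∀ z ∈ Icc (z₀ - 1) (z₀ + 1), ‖g (x, z)‖ ≤ C := by
  obtain ⟨C, hC⟩ := (isCompact_Icc.prod isCompact_Icc).exists_bound_of_continuousOn
    (hg.continuousOn (s := Icc (0:ℝ) 1 ×ˢ Icc (z₀-1) (z₀+1)))
  exact ⟨C, fun x hx z hz => hC (x, z) ⟨hx, hz⟩⟩

lemma cont_param (f : ℝ × ℝ → ℝ) (hf : Continuous f) :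
    Continuous (fun z => ∫ x, f (x, z) ∂μX) := by
  rw [continuous_iff_continuousAt]
  intro z₀
  obtain ⟨C, hC⟩ := strip_bound f hf z₀
  apply continuousAt_of_dominated (bound := fun _ => C)
  · exact Eventually.of_forall fun z =>
      (hf.comp (continuous_id.prodMk continuous_const)).aestronglyMeasurable
  · filter_upwards [Icc_mem_nhds (by linarith : z₀ - 1 < z₀) (by linarith : z₀ < z₀ + 1)] with z hz
    filter_upwards [self_mem_ae_restrict measurableSet_Ioc] with x hx
    exact hC x (Ioc_subset_Icc_self hx) z hz
  · exact integrable_const C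
  · exact Eventually.of_forall fun x =>
      ((hf.comp (continuous_const.prodMk continuous_id)).continuousAt)

lemma deriv_param (f g : ℝ × ℝ → ℝ) (hf : Continuous f) (hg : Continuous g)
    (hd : ∀ x z, HasDerivAt (fun ζ => f (x, ζ)) (g (x, z)) z) (z₀ : ℝ) :
    HasDerivAt (fun z => ∫ x, f (x, z) ∂μX) (∫ x, g (x, z₀) ∂μX) z₀ := by
  obtain ⟨C, hC⟩ := strip_bound g hg z₀
  refine (hasDerivAt_integral_of_dominated_loc_of_deriv_le (ball_mem_nhds z₀ one_pos)
    (F := fun z x => f (x, z)) (F' := fun z x => g (x, z)) (bound := fun _ => C)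
    ?_ ?_ ?_ ?_ ?_ ?_).2
  · exact Eventually.of_forall fun z =>
      (hf.comp (continuous_id.prodMk continuous_const)).aestronglyMeasurable
  · exact integrable_cont (hf.comp (continuous_id.prodMk continuous_const))
  · exact (hg.comp (continuous_id.prodMk continuous_const)).aestronglyMeasurable
  · filter_upwards [self_mem_ae_restrict measurableSet_Ioc] with x hx
    intro z hz
    have : z ∈ Icc (z₀ - 1) (z₀ + 1) := by
      rw [mem_ball, Real.dist_eq] at hz
      constructor <;> [linarith [abs_le.mp hz.le]; linarith [(abs_le.mp hz.le).2]]
    exact hC x (Ioc_subset_Icc_self hx) z this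
  · exact integrable_const C
  · exact Eventually.of_forall fun x => fun z _ => hd x z


lemma memL2_cont {f : ℝ → ℝ} (hf : Continuous f) : MemLp f (ENNReal.ofReal 2) μX := by
  obtain ⟨C, hC⟩ := isCompact_Icc.exists_bound_of_continuousOn
    (hf.continuousOn (s := Icc (0:ℝ) 1))
  refine MemLp.of_bound hf.aestronglyMeasurable C ?_
  filter_upwards [self_mem_ae_restrict (measurableSet_Ioc : MeasurableSet (Ioc (0:ℝ) 1))] with x hx
  exact hC x (Ioc_subset_Icc_self hx)

lemma cs_μX {f g : ℝ → ℝ} (hf : Continuous f) (hg : Continuous g) :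
    |∫ x, f x * g x ∂μX| ≤ Real.sqrt (∫ x, (f x)^2 ∂μX) * Real.sqrt (∫ x, (g x)^2 ∂μX) := by
  have hpq : Real.HolderConjugate 2 2 := Real.holderConjugate_iff.mpr ⟨one_lt_two, by norm_num⟩
  have h1 : |∫ x, f x * g x ∂μX| ≤ ∫ x, ‖f x‖ * ‖g x‖ ∂μX := by
    calc |∫ x, f x * g x ∂μX| = ‖∫ x, f x * g x ∂μX‖ := (Real.norm_eq_abs _).symm
    _ ≤ ∫ x, ‖f x * g x‖ ∂μX := norm_integral_le_integral_norm _
    _ = ∫ x, ‖f x‖ * ‖g x‖ ∂μX := by simp [norm_mul]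
  have h2 := integral_mul_norm_le_Lp_mul_Lq hpq (memL2_cont hf) (memL2_cont hg)
  have e1 : ∀ (u : ℝ → ℝ), ∫ x, ‖u x‖ ^ (2:ℝ) ∂μX = ∫ x, (u x)^2 ∂μX := by
    intro u
    refine integral_congr_ae (Eventually.of_forall fun x => ?_)
    simp only [Real.rpow_two]
    simp [Real.norm_eq_abs, sq_abs]
  have hnn : ∀ (u : ℝ → ℝ), 0 ≤ ∫ x, (u x)^2 ∂μX := fun u =>
    integral_nonneg fun x => sq_nonneg _
  rw [e1 f, e1 g] at h2
  calc |∫ x, f x * g x ∂μX| ≤ (∫ x, (f x)^2 ∂μX) ^ (1/2:ℝ) * (∫ x, (g x)^2 ∂μX) ^ (1/2:ℝ) :=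
        h1.trans h2
  _ = Real.sqrt (∫ x, (f x)^2 ∂μX) * Real.sqrt (∫ x, (g x)^2 ∂μX) := by
        rw [Real.sqrt_eq_rpow, Real.sqrt_eq_rpow]

lemma no_slow_decay {h : ℝ → ℝ} {M c : ℝ} (hM : 0 < M) (hc : 0 < c)
    (hh : IntegrableOn h (Ioi M)) (hbd : ∀ z ∈ Ioi M, c ≤ z * h z) : False := by
  have hmeas : AEStronglyMeasurable (fun z : ℝ => c * z⁻¹) (volume.restrict (Ioi M)) :=
    (measurable_const.mul measurable_inv).aestronglyMeasurable
  have hint : IntegrableOn (fun z : ℝ => c * z⁻¹) (Ioi M) := by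
    refine Integrable.mono' hh hmeas ?_
    filter_upwards [self_mem_ae_restrict (measurableSet_Ioi : MeasurableSet (Ioi M))] with z hz
    have hz0 : (0:ℝ) < z := hM.trans hz
    have hbz := hbd z hz
    rw [Real.norm_eq_abs, abs_of_nonneg (by positivity)]
    rw [mul_inv_le_iff₀ hz0]
    linarith [hbz]
  have hint2 : IntegrableOn (fun z : ℝ => z⁻¹) (Ioi M) := by
    have h2 : IntegrableOn (fun z : ℝ => c⁻¹ * (c * z⁻¹)) (Ioi M) := hint.const_mul c⁻¹
    refine h2.congr_fun (fun z _ => ?_) measurableSet_Ioi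
    field_simp
  have hint3 : IntegrableOn (fun z : ℝ => z ^ (-1:ℝ)) (Ioi M) := by
    refine hint2.congr_fun (fun z hz => ?_) measurableSet_Ioi
    rw [Real.rpow_neg_one]
  have := (integrableOn_Ioi_rpow_iff hM).mp hint3
  linarith

set_option maxHeartbeats 1000000 in
/-- under the Shercliff constraint `∂_x u + ∂²_z b = 0`, homogeneous
Dirichlet conditions and decay, `∫_Ω (∂_x ∂_z b)(∂_z u) = -∫_Ω |∂_x u|²`. -/
theorem stmt_6 (u b : ℝ → ℝ → ℝ)
    (hu : ContDiff ℝ (⊤ : ℕ∞) (fun p : ℝ × ℝ => u p.1 p.2))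
    (hb : ContDiff ℝ (⊤ : ℕ∞) (fun p : ℝ × ℝ => b p.1 p.2))
    (hup : ∀ z, Function.Periodic (fun x => u x z) 1)
    (hbp : ∀ z, Function.Periodic (fun x => b x z) 1)
    (hu0 : ∀ x, u x 0 = 0) (hb0 : ∀ x, b x 0 = 0)
    (hudec : ∀ x, Tendsto (fun z => u x z) atTop (𝓝 0))
    (hbdec : ∀ x, Tendsto (fun z => b x z) atTop (𝓝 0))
    (hu'dec : ∀ x, Tendsto (fun z => dZ u x z) atTop (𝓝 0))
    (hb'dec : ∀ x, Tendsto (fun z => dZ b x z) atTop (𝓝 0))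
    (hconstraint : ∀ x, ∀ z ∈ Ioi (0:ℝ), dX u x z + dZ (dZ b) x z = 0)
    (hint1 : Integrable (fun p : ℝ × ℝ => dX (dZ b) p.1 p.2 * dZ u p.1 p.2) μΩ)
    (hint2 : Integrable (fun p : ℝ × ℝ => (dX u p.1 p.2)^2) μΩ) :
    ∫ p, dX (dZ b) p.1 p.2 * dZ u p.1 p.2 ∂μΩ = -∫ p, (dX u p.1 p.2)^2 ∂μΩ := by
  classical
  set B : ℝ × ℝ → ℝ := fun p => b p.1 p.2 with hBdef
  set U : ℝ × ℝ → ℝ := fun p => u p.1 p.2 with hUdef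
  set bz := pd (0,1) B with hbzdef
  set ux := pd (1,0) U with huxdef
  set uz := pd (0,1) U with huzdef
  set bzz := pd (0,1) bz with hbzzdef
  set bxz := pd (1,0) bz with hbxzdef
  set uzx := pd (0,1) ux with huzxdef
  set uxz := pd (1,0) uz with huxzdef
  have hcbz : ContDiff ℝ (⊤ : ℕ∞) bz := contDiff_pd hb _
  have hcux : ContDiff ℝ (⊤ : ℕ∞) ux := contDiff_pd hu _
  have hcuz : ContDiff ℝ (⊤ : ℕ∞) uz := contDiff_pd hu _
  have hcbzz : ContDiff ℝ (⊤ : ℕ∞) bzz := contDiff_pd hcbz _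
  have hcbxz : ContDiff ℝ (⊤ : ℕ∞) bxz := contDiff_pd hcbz _
  have hcuzx : ContDiff ℝ (⊤ : ℕ∞) uzx := contDiff_pd hcux _
  have hcuxz : ContDiff ℝ (⊤ : ℕ∞) uxz := contDiff_pd hcuz _
  have cx : ∀ (F : ℝ × ℝ → ℝ), Continuous F → ∀ z : ℝ, Continuous (fun x => F (x, z)) :=
    fun F hF z => hF.comp (continuous_id.prodMk continuous_const)
  -- bridges between dX/dZ and pd
  have ebz : ∀ x z, dZ b x z = bz (x, z) := fun x z => (hasDerivAt_slice2 hb x z).deriv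
  have eux : ∀ x z, dX u x z = ux (x, z) := fun x z => (hasDerivAt_slice1 hu x z).deriv
  have euz : ∀ x z, dZ u x z = uz (x, z) := fun x z => (hasDerivAt_slice2 hu x z).deriv
  have ebxz : ∀ x z, dX (dZ b) x z = bxz (x, z) := by
    intro x z
    have hfe : (fun x' => dZ b x' z) = (fun x' => bz (x', z)) := funext fun x' => ebz x' z
    rw [dX, hfe]
    exact (hasDerivAt_slice1 hcbz x z).deriv
  have ebzz : ∀ x z, dZ (dZ b) x z = bzz (x, z) := by
    intro x z
    have hfe : (fun z' => dZ b x z') = (fun z' => bz (x, z')) := funext fun z' => ebz x z'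
    rw [dZ, hfe]
    exact (hasDerivAt_slice2 hcbz x z).deriv
  have esymm : ∀ p : ℝ × ℝ, uxz p = uzx p := fun p => pd_comm hu (0,1) (1,0) p
  have hconstr : ∀ x z, 0 < z → bzz (x, z) = - ux (x, z) := by
    intro x z hz
    have h := hconstraint x z hz
    rw [eux, ebzz] at h; linarith
  have hux0 : ∀ x, ux (x, 0) = 0 := by
    intro x
    rw [← eux]
    have hfe : (fun x' => u x' 0) = fun _ => (0:ℝ) := funext fun x' => hu0 x'
    rw [dX, hfe]
    exact deriv_const x 0
  have hper_b : ∀ z, bz (1, z) = bz (0, z) := by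
    intro z
    rw [← ebz, ← ebz]
    have hfe : (fun z' => b 1 z') = (fun z' => b 0 z') := funext fun z' => by
      simpa using hbp z' 0
    rw [dZ, dZ, hfe]
  have hper_u : ∀ z, uz (1, z) = uz (0, z) := by
    intro z
    rw [← euz, ← euz]
    have hfe : (fun z' => u 1 z') = (fun z' => u 0 z') := funext fun z' => by
      simpa using hup z' 0
    rw [dZ, dZ, hfe]
  -- parametrized integrals
  set G : ℝ → ℝ := fun z => ∫ x, bz (x, z) * ux (x, z) ∂μX with hGdef
  set g : ℝ → ℝ := fun z => ∫ x, (bzz (x, z) * ux (x, z) + bz (x, z) * uzx (x, z)) ∂μX with hgdef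
  set H : ℝ → ℝ := fun z => ∫ x, (bz (x, z))^2 ∂μX with hHdef
  set q : ℝ → ℝ := fun z => ∫ x, (bzz (x, z) * bz (x, z) + bz (x, z) * bzz (x, z)) ∂μX with hqdef
  set h : ℝ → ℝ := fun z => ∫ x, (ux (x, z))^2 ∂μX with hhdef
  have hGcont : Continuous G :=
    cont_param (fun p => bz p * ux p) (hcbz.continuous.mul hcux.continuous)
  have hgcont : Continuous g :=
    cont_param (fun p => bzz p * ux p + bz p * uzx p)
      ((hcbzz.continuous.mul hcux.continuous).add (hcbz.continuous.mul hcuzx.continuous))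
  have hqcont : Continuous q :=
    cont_param (fun p => bzz p * bz p + bz p * bzz p)
      ((hcbzz.continuous.mul hcbz.continuous).add (hcbz.continuous.mul hcbzz.continuous))
  have hGd : ∀ z, HasDerivAt G (g z) z := fun z₀ =>
    deriv_param (fun p => bz p * ux p) (fun p => bzz p * ux p + bz p * uzx p)
      (hcbz.continuous.mul hcux.continuous)
      ((hcbzz.continuous.mul hcux.continuous).add (hcbz.continuous.mul hcuzx.continuous))
      (fun x z => (hasDerivAt_slice2 hcbz x z).mul (hasDerivAt_slice2 hcux x z)) z₀
  have hHd : ∀ z, HasDerivAt H (q z) z := fun z₀ =>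
    deriv_param (fun p => (bz p)^2) (fun p => bzz p * bz p + bz p * bzz p)
      (hcbz.continuous.pow 2)
      ((hcbzz.continuous.mul hcbz.continuous).add (hcbz.continuous.mul hcbzz.continuous))
      (fun x z => by
        simp only [pow_two]; exact (hasDerivAt_slice2 hcbz x z).mul (hasDerivAt_slice2 hcbz x z)) z₀
  have hqG : ∀ z, 0 < z → q z = -2 * G z := by
    intro z hz
    have heq : ∀ x : ℝ, bzz (x, z) * bz (x, z) + bz (x, z) * bzz (x, z)
        = -2 * (bz (x, z) * ux (x, z)) := by
      intro x; rw [hconstr x z hz]; ring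
    calc q z = ∫ x, -2 * (bz (x, z) * ux (x, z)) ∂μX :=
          integral_congr_ae (Eventually.of_forall heq)
      _ = -2 * G z := integral_const_mul _ _
  -- Fubini setup
  have hμ : μΩ = μX.prod (volume.restrict (Ioi (0:ℝ))) := rfl
  set J : ℝ × ℝ → ℝ := fun p => dX (dZ b) p.1 p.2 * dZ u p.1 p.2 + (dX u p.1 p.2)^2 with hJdef
  have hJint : Integrable J μΩ := hint1.add hint2
  have hJint' : Integrable J (μX.prod (volume.restrict (Ioi (0:ℝ)))) := hμ ▸ hJint
  have hW : Integrable (fun z => ∫ x, J (x, z) ∂μX) (volume.restrict (Ioi (0:ℝ))) :=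
    hJint'.integral_prod_right
  have hsplit : ∫ p, J p ∂μΩ
      = (∫ p, dX (dZ b) p.1 p.2 * dZ u p.1 p.2 ∂μΩ) + ∫ p, (dX u p.1 p.2)^2 ∂μΩ :=
    integral_add hint1 hint2
  have hfub : ∫ p, J p ∂μΩ = ∫ z in Ioi (0:ℝ), (∫ x, J (x, z) ∂μX) := by
    rw [hμ]; exact integral_prod_symm J hJint'
  -- slice identity
  have hslice : ∀ z, 0 < z → (∫ x, J (x, z) ∂μX) = - g z := by
    intro z hz
    have hint_a : Integrable (fun x => bxz (x, z) * uz (x, z) + bz (x, z) * uxz (x, z)) μX :=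
      integrable_cont (((cx bxz hcbxz.continuous z).mul (cx uz hcuz.continuous z)).add
        ((cx bz hcbz.continuous z).mul (cx uxz hcuxz.continuous z)))
    have hint_c : Integrable (fun x => bzz (x, z) * ux (x, z) + bz (x, z) * uzx (x, z)) μX :=
      integrable_cont (((cx bzz hcbzz.continuous z).mul (cx ux hcux.continuous z)).add
        ((cx bz hcbz.continuous z).mul (cx uzx hcuzx.continuous z)))
    have hJeq : ∀ x, J (x, z) = (bxz (x, z) * uz (x, z) + bz (x, z) * uxz (x, z))
        - (bzz (x, z) * ux (x, z) + bz (x, z) * uzx (x, z)) := by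
      intro x
      show dX (dZ b) x z * dZ u x z + (dX u x z)^2 = _
      rw [ebxz, euz, eux, esymm (x, z), hconstr x z hz]
      ring
    have FTCa : ∫ x, (bxz (x, z) * uz (x, z) + bz (x, z) * uxz (x, z)) ∂μX = 0 := by
      have hd : ∀ x ∈ uIcc (0:ℝ) 1,
          HasDerivAt (fun x' => bz (x', z) * uz (x', z))
            (bxz (x, z) * uz (x, z) + bz (x, z) * uxz (x, z)) x :=
        fun x _ => (hasDerivAt_slice1 hcbz x z).mul (hasDerivAt_slice1 hcuz x z)
      have hiv : ∫ x in (0:ℝ)..1, (bxz (x, z) * uz (x, z) + bz (x, z) * uxz (x, z))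
          = bz (1, z) * uz (1, z) - bz (0, z) * uz (0, z) :=
        intervalIntegral.integral_eq_sub_of_hasDerivAt hd
          ((((cx bxz hcbxz.continuous z).mul (cx uz hcuz.continuous z)).add
            ((cx bz hcbz.continuous z).mul (cx uxz hcuxz.continuous z))).intervalIntegrable _ _)
      rw [intervalIntegral.integral_of_le zero_le_one] at hiv
      rw [hper_b z, hper_u z] at hiv
      simpa [μX] using hiv
    calc ∫ x, J (x, z) ∂μX
        = ∫ x, ((bxz (x, z) * uz (x, z) + bz (x, z) * uxz (x, z))
            - (bzz (x, z) * ux (x, z) + bz (x, z) * uzx (x, z))) ∂μX :=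
          integral_congr_ae (Eventually.of_forall hJeq)
      _ = (∫ x, (bxz (x, z) * uz (x, z) + bz (x, z) * uxz (x, z)) ∂μX)
            - ∫ x, (bzz (x, z) * ux (x, z) + bz (x, z) * uzx (x, z)) ∂μX :=
          integral_sub hint_a hint_c
      _ = - g z := by rw [FTCa]; simp [hgdef]
  -- integrability of g on Ioi 0
  have hgint : IntegrableOn g (Ioi (0:ℝ)) := by
    refine (hW.neg).congr ?_
    filter_upwards [self_mem_ae_restrict (measurableSet_Ioi : MeasurableSet (Ioi (0:ℝ)))] with z hz
    simp [hslice z hz]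
  -- limit of G at infinity
  have hFTCG : ∀ T : ℝ, G T = G 1 + ∫ t in (1:ℝ)..T, g t := by
    intro T
    have hiv : ∫ t in (1:ℝ)..T, g t = G T - G 1 :=
      intervalIntegral.integral_eq_sub_of_hasDerivAt (fun t _ => hGd t)
        (hgcont.intervalIntegrable _ _)
    linarith
  set L : ℝ := G 1 + ∫ t in Ioi (1:ℝ), g t with hLdef
  have hGtend : Tendsto G atTop (𝓝 L) := by
    have h1 : Tendsto (fun T => G 1 + ∫ t in (1:ℝ)..T, g t) atTop (𝓝 L) :=
      tendsto_const_nhds.add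
        (intervalIntegral_tendsto_integral_Ioi 1
          (hgint.mono_set (Ioi_subset_Ioi zero_le_one)) tendsto_id)
    exact h1.congr fun T => (hFTCG T).symm
  have hG0 : G 0 = 0 := by
    have heq : ∀ x : ℝ, bz (x, 0) * ux (x, 0) = 0 := fun x => by rw [hux0 x, mul_zero]
    calc G 0 = ∫ x, (0:ℝ) ∂μX := integral_congr_ae (Eventually.of_forall heq)
      _ = 0 := integral_zero _ _
  have hHnn : ∀ z, 0 ≤ H z := fun z => integral_nonneg fun x => sq_nonneg _
  have hhnn : ∀ z, 0 ≤ h z := fun z => integral_nonneg fun x => sq_nonneg _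
  have hhint : IntegrableOn h (Ioi (0:ℝ)) := by
    have h2 : Integrable (fun p : ℝ × ℝ => (dX u p.1 p.2)^2)
        (μX.prod (volume.restrict (Ioi (0:ℝ)))) := hμ ▸ hint2
    have hfix : ∀ z : ℝ, (∫ x, (dX u x z)^2 ∂μX) = h z := fun z =>
      integral_congr_ae (Eventually.of_forall fun x => by simp only [eux])
    exact h2.integral_prod_right.congr (Eventually.of_forall hfix)
  have hCS : ∀ z, |G z| ≤ Real.sqrt (H z) * Real.sqrt (h z) := fun z =>
    cs_μX (cx bz hcbz.continuous z) (cx ux hcux.continuous z)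
  have hIoi : ∫ t in Ioi (0:ℝ), g t = L - G 0 :=
    integral_Ioi_of_hasDerivAt_of_tendsto hGcont.continuousWithinAt
      (fun t _ => hGd t) hgint hGtend
  have hmain : ∫ p, J p ∂μΩ = - (L - G 0) := by
    rw [hfub]
    have hcongr : ∫ z in Ioi (0:ℝ), (∫ x, J (x, z) ∂μX) = ∫ z in Ioi (0:ℝ), (- g z) :=
      setIntegral_congr_fun measurableSet_Ioi fun z hz => hslice z hz
    rw [hcongr, integral_neg, hIoi]
  -- the limit L is zero
  have habs : Tendsto (fun T => |G T|) atTop (𝓝 |L|) := hGtend.abs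
  have key : ∀ ε : ℝ, 0 < ε → |L| ≤ ε := by
    intro ε hε
    have hev : ∀ᶠ T in atTop, |G T| < |L| + 1 :=
      habs.eventually_lt_const (by linarith [abs_nonneg L])
    obtain ⟨M₀, hM₀⟩ := eventually_atTop.mp hev
    set M : ℝ := max M₀ 1 + 1 with hMdef
    have hM1 : 1 ≤ M := by have := le_max_right M₀ 1; simp only [hMdef]; linarith
    have hM0 : 0 < M := by linarith
    have hMM₀ : M₀ ≤ M := by have := le_max_left M₀ 1; simp only [hMdef]; linarith
    set C : ℝ := H M + 2 * (|L| + 1) with hCdef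
    have hC0 : 0 < C := by have h1 := hHnn M; have h2 := abs_nonneg L; simp only [hCdef]; linarith
    have hHlin : ∀ T, M ≤ T → H T ≤ C * T := by
      intro T hT
      have hFTC : ∫ t in M..T, q t = H T - H M :=
        intervalIntegral.integral_eq_sub_of_hasDerivAt (fun t _ => hHd t)
          (hqcont.intervalIntegrable _ _)
      have hbound : ∀ t ∈ Set.uIoc M T, ‖q t‖ ≤ 2 * (|L| + 1) := by
        intro t ht
        rw [Set.uIoc_of_le hT] at ht
        have ht0 : 0 < t := lt_trans hM0 ht.1
        have htM₀ : M₀ ≤ t := le_trans hMM₀ ht.1.le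
        have hGt := hM₀ t htM₀
        rw [Real.norm_eq_abs, hqG t ht0, abs_mul]
        have habs2 : |(-2:ℝ)| = 2 := by norm_num
        rw [habs2]
        nlinarith [abs_nonneg (G t)]
      have hb2 := intervalIntegral.norm_integral_le_of_norm_le_const hbound
      rw [Real.norm_eq_abs, hFTC] at hb2
      have h2 : |T - M| = T - M := abs_of_nonneg (by linarith)
      rw [h2] at hb2
      have h3 := (abs_le.mp hb2).2
      have h4 : H M ≤ H M * T := le_mul_of_one_le_right (hHnn M) (le_trans hM1 hT)
      have h5 : 0 ≤ |L| := abs_nonneg L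
      simp only [hCdef]
      nlinarith [hHnn M]
    set δ : ℝ := ε^2 / (2*(C+1)) with hδdef
    have hδ0 : 0 < δ := by
      simp only [hδdef]; apply div_pos (by positivity); linarith
    have hfreq : ∃ᶠ T in atTop, T * h T < δ := by
      by_contra hcon
      rw [Filter.not_frequently] at hcon
      obtain ⟨M₁', hM₁'⟩ := eventually_atTop.mp hcon
      have hM₁pos : (0:ℝ) < max M₁' 1 := lt_of_lt_of_le one_pos (le_max_right _ _)
      refine no_slow_decay hM₁pos hδ0
        (hhint.mono_set (Ioi_subset_Ioi hM₁pos.le)) ?_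
      intro zz hzz
      have hz2 := hM₁' zz (le_trans (le_max_left _ _) (le_of_lt hzz))
      simpa using not_lt.mp hz2
    have hcomb : ∃ᶠ T in atTop, |G T| ≤ ε := by
      refine (hfreq.and_eventually (eventually_ge_atTop M)).mono ?_
      rintro T ⟨hTδ, hTM⟩
      have hT0 : 0 < T := lt_of_lt_of_le hM0 hTM
      have h1 := hCS T
      have h2 : Real.sqrt (H T) ≤ Real.sqrt (C * T) := Real.sqrt_le_sqrt (hHlin T hTM)
      have h3 : Real.sqrt (C*T) * Real.sqrt (h T) = Real.sqrt (C * T * h T) :=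
        (Real.sqrt_mul (mul_nonneg hC0.le hT0.le) _).symm
      have h4 : C * T * h T ≤ C * δ := by
        calc C * T * h T = C * (T * h T) := by ring
          _ ≤ C * δ := mul_le_mul_of_nonneg_left hTδ.le hC0.le
      have h5 : C * δ ≤ ε ^ 2 := by
        have h2C : (0:ℝ) < 2*(C+1) := by linarith
        simp only [hδdef]
        rw [mul_div_assoc', div_le_iff₀ h2C]
        nlinarith [sq_nonneg ε, hC0.le]
      calc |G T| ≤ Real.sqrt (H T) * Real.sqrt (h T) := h1
        _ ≤ Real.sqrt (C*T) * Real.sqrt (h T) :=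
            mul_le_mul_of_nonneg_right h2 (Real.sqrt_nonneg _)
        _ = Real.sqrt (C*T*h T) := h3
        _ ≤ Real.sqrt (ε^2) := Real.sqrt_le_sqrt (h4.trans h5)
        _ = ε := Real.sqrt_sq hε.le
    by_contra hlt
    push_neg at hlt
    have hev2 : ∀ᶠ T in atTop, ε < |G T| := habs.eventually_const_lt hlt
    obtain ⟨T, hT1, hT2⟩ := (hcomb.and_eventually hev2).exists
    linarith
  have hLabs : |L| ≤ 0 := by
    by_contra h0
    push_neg at h0
    have := key (|L|/2) (by linarith)
    linarith
  have hL0 : L = 0 := abs_eq_zero.mp (le_antisymm hLabs (abs_nonneg L))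
  have hJzero : ∫ p, J p ∂μΩ = 0 := by rw [hmain, hL0, hG0]; ring
  rw [hsplit] at hJzero
  linarith
end

section
/- Let Ω = 𝕋 × (0,∞) and let u, φ be smooth on Ω, periodic in x with φ of zero x-average, u = φ = 0 at z = 0, with decay at z = ∞. Suppose (u, v, φ) satisfy the linearized fully nonlinear MHD layer system: ∂_t u + U ∂_x u + U' v - ∂²_z u = S ∂_x b and ∂_t φ + U ∂_x φ - v - μ ∂²_z φ = 0, where b = -∂_z φ and v = -∫₀^z ∂_x u. Then the modified unknown ũ = u + U' φ satisfies ∂_t ũ + U ∂_x ũ - ∂²_z ũ = S ∂_x b + μ U' ∂²_z φ - ∂²_z (U' φ); in particular the singular term U' v cancels. -/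
open Real Filter Topology Set intervalIntegral

/-- cancellation lemma for the linearized fully nonlinear MHD layer:
if `∂_t u + U ∂_x u + U' v - ∂²_z u = S ∂_x b` and
`∂_t φ + U ∂_x φ - v - μ ∂²_z φ = 0`, with `b = -∂_z φ` and `v = -∫₀^z ∂_x u`,
then `ũ = u + U' φ` satisfies
`∂_t ũ + U ∂_x ũ - ∂²_z ũ = S ∂_x b + μ U' ∂²_z φ - ∂²_z (U' φ)`:
the singular term `U' v` cancels. -/
theorem stmt_12 (S μ T : ℝ) (hS : 0 < S) (hμ : 0 < μ) (hT : 0 < T)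
    (u v φ b tu : ℝ → ℝ → ℝ → ℝ) (U : ℝ → ℝ)
    (hu : ContDiff ℝ (⊤ : ℕ∞) (fun p : ℝ × ℝ × ℝ => u p.1 p.2.1 p.2.2))
    (hφ : ContDiff ℝ (⊤ : ℕ∞) (fun p : ℝ × ℝ × ℝ => φ p.1 p.2.1 p.2.2))
    (hU : ContDiff ℝ (⊤ : ℕ∞) U)
    (hφavg : ∀ t z, (∫ x in (0:ℝ)..1, φ t x z) = 0)
    (hφper : ∀ t z, Function.Periodic (fun x => φ t x z) 1)
    (huper : ∀ t z, Function.Periodic (fun x => u t x z) 1)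
    (hu0 : ∀ t x, u t x 0 = 0) (hφ0 : ∀ t x, φ t x 0 = 0)
    (hb : ∀ t x z, b t x z = -dZ (φ t) x z)
    (hv : ∀ t x z, v t x z = -∫ s in (0:ℝ)..z, dX (u t) x s)
    (heqU : ∀ t ∈ Ioo 0 T, ∀ (x : ℝ), ∀ z ∈ Ioi (0:ℝ),
        deriv (fun s => u s x z) t + U z * dX (u t) x z + deriv U z * v t x z
          - dZ (dZ (u t)) x z = S * dX (b t) x z)
    (heqφ : ∀ t ∈ Ioo 0 T, ∀ (x : ℝ), ∀ z ∈ Ioi (0:ℝ),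
        deriv (fun s => φ s x z) t + U z * dX (φ t) x z - v t x z
          - μ * dZ (dZ (φ t)) x z = 0)
    (htu : ∀ t x z, tu t x z = u t x z + deriv U z * φ t x z) :
    ∀ t ∈ Ioo 0 T, ∀ (x : ℝ), ∀ z ∈ Ioi (0:ℝ),
      deriv (fun s => tu s x z) t + U z * dX (tu t) x z - dZ (dZ (tu t)) x z
        = S * dX (b t) x z + μ * deriv U z * dZ (dZ (φ t)) x z
          - dZ (dZ (fun x' z' => deriv U z' * φ t x' z')) x z := by
  intro t ht x z hz
  have h1le : ((⊤ : ℕ∞) : WithTop ℕ∞) ≠ 0 := by simp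
  have hu' : ContDiff ℝ ((⊤ : ℕ∞) : WithTop ℕ∞) (fun p : ℝ × ℝ × ℝ => u p.1 p.2.1 p.2.2) := hu.of_le (by simp)
  have hφ' : ContDiff ℝ ((⊤ : ℕ∞) : WithTop ℕ∞) (fun p : ℝ × ℝ × ℝ => φ p.1 p.2.1 p.2.2) := hφ.of_le (by simp)
  have hU' : ContDiff ℝ ((⊤ : ℕ∞) : WithTop ℕ∞) (deriv U) := (contDiff_infty_iff_deriv.mp (hU.of_le (by simp))).2
  have slice : ∀ (f : ℝ → ℝ → ℝ → ℝ),
      ContDiff ℝ ((⊤ : ℕ∞) : WithTop ℕ∞) (fun p : ℝ × ℝ × ℝ => f p.1 p.2.1 p.2.2) →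
      (∀ a c, ContDiff ℝ ((⊤ : ℕ∞) : WithTop ℕ∞) (fun s => f s a c)) ∧
      (∀ a c, ContDiff ℝ ((⊤ : ℕ∞) : WithTop ℕ∞) (fun s => f a s c)) ∧
      (∀ a c, ContDiff ℝ ((⊤ : ℕ∞) : WithTop ℕ∞) (fun s => f a c s)) := by
    intro f hf
    exact ⟨fun a c => hf.comp (contDiff_id.prodMk (contDiff_const.prodMk contDiff_const)),
      fun a c => hf.comp (contDiff_const.prodMk (contDiff_id.prodMk contDiff_const)),
      fun a c => hf.comp (contDiff_const.prodMk (contDiff_const.prodMk contDiff_id))⟩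
  obtain ⟨hut, hux, huz⟩ := slice u hu'
  obtain ⟨hφt, hφx, hφz⟩ := slice φ hφ'
  have hmix : ContDiff ℝ ((⊤ : ℕ∞) : WithTop ℕ∞) (fun z' => deriv U z' * φ t x z') := hU'.mul (hφz t x)
  have h1 : deriv (fun s => tu s x z) t
      = deriv (fun s => u s x z) t + deriv U z * deriv (fun s => φ s x z) t := by
    have he : (fun s => tu s x z) = fun s => u s x z + deriv U z * φ s x z := by
      funext s; exact htu s x z
    rw [he, deriv_fun_add ((hut x z).differentiable h1le t)
      (((hφt x z).differentiable h1le t).const_mul _),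
      deriv_const_mul _ ((hφt x z).differentiable h1le t)]
  have h2 : dX (tu t) x z = dX (u t) x z + deriv U z * dX (φ t) x z := by
    have he : (fun x' => tu t x' z) = fun x' => u t x' z + deriv U z * φ t x' z := by
      funext x'; exact htu t x' z
    simp only [dX]
    rw [he, deriv_fun_add ((hux t z).differentiable h1le x)
      (((hφx t z).differentiable h1le x).const_mul _),
      deriv_const_mul _ ((hφx t z).differentiable h1le x)]
  have h3 : dZ (dZ (tu t)) x z
      = dZ (dZ (u t)) x z + dZ (dZ (fun x' z' => deriv U z' * φ t x' z')) x z := by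
    have hdz : (fun z' => dZ (tu t) x z')
        = fun z' => dZ (u t) x z' + deriv (fun z'' => deriv U z'' * φ t x z'') z' := by
      funext z'
      have he : (fun z'' => tu t x z'') = fun z'' => u t x z'' + deriv U z'' * φ t x z'' := by
        funext s; exact htu t x s
      simp only [dZ]
      rw [he, deriv_fun_add ((huz t x).differentiable h1le z') (hmix.differentiable h1le z')]
    simp only [dZ] at hdz ⊢
    rw [hdz, deriv_fun_add ((contDiff_infty_iff_deriv.mp (huz t x)).2.differentiable h1le z)
      ((contDiff_infty_iff_deriv.mp hmix).2.differentiable h1le z)]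
  rw [h1, h2, h3]
  linear_combination (heqU t ht x z hz) + (deriv U z) * (heqφ t ht x z hz)
end
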